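/- Thermodynamic limit of the multi-species mean-field pressure: for the Hamiltonian H_N(σ) = -N[(1/2)∑_{l,s=1}^n α_l α_s J_{ls} m_l(σ) m_s(σ) + ∑_l α_l h_l m_l(σ)] on {-1,1}^N with fixed proportions α_l = N_l/N, the pressure p_N = (1/N) log[(1/2^N) ∑_σ exp(-H_N(σ))] converges as N → ∞ (with α fixed) to max over x ∈ [-1,1]^n of f̄(x) = (1/2)∑_{l,s} α_l α_s J_{ls} x_l x_s + ∑_l α_l h_l x_l - ∑_l α_l 𝓘(x_l), where 𝓘(x) = ((1+x)log(1+x)+(1-x)log(1-x))/2. -/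

import Mathlib

/-!
Grouping the configurations by the numbers `K l` of up-spins in each group, the partition
function becomes a sum over at most `∏ l, (N_l + 1) ≤ (N + 1)^n` types of
`∏ l, C(N_l, K_l) · exp (N g(m(K)))`. The `j`-th term of the binomial expansion of
`(j + (M - j))^M = M^M` is its largest, so `C(M, j)` lies between `exp (M H(j/M)) / (M + 1)` and
`exp (M H(j/M))` with `H` the binary entropy, and `𝓘(x) = log 2 - H((1 + x)/2)`. Hence every
type contributes `2^N exp (N f̄(m(K)))` up to a polynomial factor, so
`p_N ≤ max f̄ + n log (N + 1) / N`, while the types with `K_l ≈ N_l (1 + x_l)/2` at a maximiser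
`x` of `f̄` give `p_N ≥ f̄(m(K)) - n log (N + 1) / N`, and `f̄(m(K)) → f̄(x)` by continuity.
-/

open Real Filter Finset

noncomputable def entI14 (x : ℝ) : ℝ :=
  ((1 + x) * Real.log (1 + x) + (1 - x) * Real.log (1 - x)) / 2

/-- Spin value of a Boolean: `true ↦ 1`, `false ↦ -1`. -/
def spin14 (b : Bool) : ℝ := if b then 1 else -1

namespace Nat

def binomialTerm (M j i : ℕ) : ℕ := M.choose i * j ^ i * (M - j) ^ (M - i)

lemma sum_binomialTerm {M j : ℕ} (hj : j ≤ M) :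
    ∑ i ∈ range (M + 1), binomialTerm M j i = M ^ M := by
  have h := add_pow j (M - j) M
  rw [Nat.add_sub_cancel' hj] at h
  rw [h]
  refine sum_congr rfl fun i _ => ?_
  rw [binomialTerm, Nat.cast_id]
  ring

lemma binomialTerm_succ_mul {M j i : ℕ} (hi : i < M) :
    binomialTerm M j (i + 1) * ((i + 1) * (M - j)) = binomialTerm M j i * ((M - i) * j) := by
  have hpow : (M - j) ^ (M - i) = (M - j) ^ (M - (i + 1)) * (M - j) := by
    rw [← pow_succ]; congr 1; omega
  calc binomialTerm M j (i + 1) * ((i + 1) * (M - j))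
      = (M.choose (i + 1) * (i + 1)) * j ^ (i + 1) * ((M - j) ^ (M - (i + 1)) * (M - j)) := by
        rw [binomialTerm]; ring
    _ = binomialTerm M j i * ((M - i) * j) := by
        rw [choose_succ_right_eq, ← hpow, binomialTerm]; ring

lemma binomialTerm_monotoneOn {M j : ℕ} (hj : j ≤ M) :
    MonotoneOn (binomialTerm M j) (Set.Iic j) := by
  refine monotoneOn_of_le_add_one Set.ordConnected_Iic fun i _ _ (hi : i + 1 ≤ j) => ?_
  refine Nat.le_of_mul_le_mul_right ?_ (Nat.mul_pos (by omega) (by omega) : 0 < (M - i) * j)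
  rw [← binomialTerm_succ_mul (by omega), mul_comm (M - i)]
  exact Nat.mul_le_mul_left _ (Nat.mul_le_mul hi (by omega))

lemma binomialTerm_antitoneOn (M j : ℕ) : AntitoneOn (binomialTerm M j) (Set.Icc j M) := by
  refine antitoneOn_of_add_one_le Set.ordConnected_Icc fun i _ ⟨hji, _⟩ ⟨_, hiM⟩ => ?_
  refine Nat.le_of_mul_le_mul_right ?_
    (Nat.mul_pos (by omega) (by omega) : 0 < (i + 1) * (M - j))
  rw [binomialTerm_succ_mul (by omega), mul_comm (i + 1)]
  exact Nat.mul_le_mul_left _ (Nat.mul_le_mul (by omega) (by omega))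

lemma binomialTerm_le_binomialTerm_self {M j i : ℕ} (hj : j ≤ M) (hi : i ≤ M) :
    binomialTerm M j i ≤ binomialTerm M j j := by
  rcases le_total i j with hij | hji
  · exact binomialTerm_monotoneOn hj hij Set.self_mem_Iic hij
  · exact binomialTerm_antitoneOn M j (Set.left_mem_Icc.2 hj) ⟨hji, hi⟩ hji

lemma binomialTerm_self_le {M j : ℕ} (hj : j ≤ M) : binomialTerm M j j ≤ M ^ M := by
  rw [← sum_binomialTerm hj]
  exact single_le_sum (fun _ _ => Nat.zero_le _) (mem_range.2 (by omega))

lemma pow_self_le_succ_mul_binomialTerm {M j : ℕ} (hj : j ≤ M) :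
    M ^ M ≤ (M + 1) * binomialTerm M j j := by
  rw [← sum_binomialTerm hj]
  calc ∑ i ∈ range (M + 1), binomialTerm M j i
      ≤ ∑ _i ∈ range (M + 1), binomialTerm M j j :=
        sum_le_sum fun i hi =>
          binomialTerm_le_binomialTerm_self hj (Nat.lt_succ_iff.1 (mem_range.1 hi))
    _ = (M + 1) * binomialTerm M j j := by simp

end Nat

lemma Real.natCast_pow_self_eq_exp (j : ℕ) : (j : ℝ) ^ j = exp (-negMulLog j) := by
  rcases j.eq_zero_or_pos with rfl | hj
  · simp
  rw [negMulLog, neg_mul, neg_neg, exp_nat_mul, exp_log (by positivity)]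

lemma Real.mul_negMulLog_div {M : ℝ} (hM : M ≠ 0) (a : ℝ) :
    M * negMulLog (a / M) = negMulLog a + a * log M := by
  rw [div_eq_mul_inv, negMulLog_mul]
  simp only [negMulLog, log_inv]
  field_simp

lemma Real.exp_mul_binEntropy_div_mul {M j : ℕ} (hj : j ≤ M) :
    exp (M * binEntropy (j / M)) * ((j : ℝ) ^ j * ((M - j : ℕ) : ℝ) ^ (M - j)) =
      (M : ℝ) ^ M := by
  rcases M.eq_zero_or_pos with rfl | hM
  · simp [Nat.le_zero.1 hj]
  have hM' : (M : ℝ) ≠ 0 := by positivity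
  have hsub : (1 : ℝ) - j / M = ((M - j : ℕ) : ℝ) / M := by
    rw [Nat.cast_sub hj]; field_simp
  rw [natCast_pow_self_eq_exp, natCast_pow_self_eq_exp, natCast_pow_self_eq_exp, ← exp_add,
    ← exp_add, binEntropy_eq_negMulLog_add_negMulLog_one_sub, hsub, mul_add,
    mul_negMulLog_div hM', mul_negMulLog_div hM', Nat.cast_sub hj]
  simp only [negMulLog]
  ring_nf

lemma Nat.choose_le_exp_mul_binEntropy {M j : ℕ} (hj : j ≤ M) :
    (M.choose j : ℝ) ≤ exp (M * binEntropy (j / M)) := by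
  have hpos : (0 : ℝ) < (j : ℝ) ^ j * ((M - j : ℕ) : ℝ) ^ (M - j) := by
    rw [natCast_pow_self_eq_exp, natCast_pow_self_eq_exp]; positivity
  refine le_of_mul_le_mul_right ?_ hpos
  rw [exp_mul_binEntropy_div_mul hj, ← mul_assoc]
  exact_mod_cast binomialTerm_self_le hj

lemma Nat.exp_mul_binEntropy_le_succ_mul_choose {M j : ℕ} (hj : j ≤ M) :
    exp (M * binEntropy (j / M)) ≤ (M + 1) * M.choose j := by
  have hpos : (0 : ℝ) < (j : ℝ) ^ j * ((M - j : ℕ) : ℝ) ^ (M - j) := by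
    rw [natCast_pow_self_eq_exp, natCast_pow_self_eq_exp]; positivity
  refine le_of_mul_le_mul_right ?_ hpos
  rw [exp_mul_binEntropy_div_mul hj, mul_assoc, ← mul_assoc (M.choose j : ℝ)]
  exact_mod_cast pow_self_le_succ_mul_binomialTerm hj

lemma entI14_eq_log_two_sub_binEntropy (x : ℝ) : entI14 x = log 2 - binEntropy ((1 + x) / 2) := by
  have h₁ : (1 + x) / 2 = (1 + x) * 2⁻¹ := div_eq_mul_inv _ _
  have h₂ : 1 - (1 + x) / 2 = (1 - x) * 2⁻¹ := by ring
  rw [binEntropy_eq_negMulLog_add_negMulLog_one_sub, h₂, h₁, negMulLog_mul, negMulLog_mul]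
  simp only [entI14, negMulLog, log_inv]
  ring

@[fun_prop]
lemma continuous_entI14 : Continuous entI14 := by
  simp only [funext entI14_eq_log_two_sub_binEntropy]
  fun_prop

lemma exp_neg_mul_entI14 (M j : ℕ) :
    exp (-(M * entI14 ((2 * j - M) / M))) = exp (M * binEntropy (j / M)) / 2 ^ M := by
  rcases M.eq_zero_or_pos with rfl | hM
  · simp
  have hfrac : (1 + (2 * j - M) / M) / 2 = (j / M : ℝ) := by field_simp; ring
  rw [entI14_eq_log_two_sub_binEntropy, hfrac, mul_sub, neg_sub, exp_sub]
  congr 1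
  rw [exp_nat_mul, exp_log two_pos]

lemma Nat.choose_div_two_pow_le_exp_neg_mul_entI14 {M j : ℕ} (hj : j ≤ M) :
    (M.choose j : ℝ) / 2 ^ M ≤ exp (-(M * entI14 ((2 * j - M) / M))) := by
  rw [exp_neg_mul_entI14]
  gcongr
  exact choose_le_exp_mul_binEntropy hj

lemma Nat.exp_neg_mul_entI14_le_succ_mul_choose_div_two_pow {M j : ℕ} (hj : j ≤ M) :
    exp (-(M * entI14 ((2 * j - M) / M))) ≤ (M + 1) * ((M.choose j : ℝ) / 2 ^ M) := by
  rw [exp_neg_mul_entI14, ← mul_div_assoc]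
  gcongr
  exact exp_mul_binEntropy_le_succ_mul_choose hj

def trueCount {M : ℕ} (f : Fin M → Bool) : ℕ := #{i | f i}

lemma trueCount_le {M : ℕ} (f : Fin M → Bool) : trueCount f ≤ M :=
  (card_filter_le _ _).trans_eq (card_fin M)

lemma sum_spin14_eq {M : ℕ} (f : Fin M → Bool) :
    ∑ i, spin14 (f i) = 2 * trueCount f - M := by
  have hspin : ∀ b, spin14 b = 2 * (if b then 1 else 0) - 1 := by
    intro b; cases b <;> norm_num [spin14]
  simp only [hspin, sum_sub_distrib, ← mul_sum, sum_boole, sum_const, card_univ,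
    Fintype.card_fin, trueCount, nsmul_eq_mul, mul_one]

lemma card_trueCount_eq (M j : ℕ) : #{f : Fin M → Bool | trueCount f = j} = M.choose j := by
  rw [show M.choose j = #(powersetCard j (univ : Finset (Fin M))) by simp]
  refine card_nbij' (fun f => ({i | f i} : Finset _)) (fun s i => decide (i ∈ s)) ?_ ?_ ?_ ?_
  · intro f hf
    simp only [coe_filter, Set.mem_ofPred_eq, mem_coe, mem_powersetCard] at hf ⊢
    exact ⟨subset_univ _, hf.2⟩
  · intro s hs
    simp only [coe_filter, Set.mem_ofPred_eq, mem_coe, mem_powersetCard] at hs ⊢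
    exact ⟨mem_univ _, by simpa [trueCount] using hs.2⟩
  · intro f _
    ext i; simp
  · intro s _
    ext i; simp

section Blocks

variable {ι : Type*} [Fintype ι] [DecidableEq ι]

lemma card_pi_trueCount_eq (N K : ι → ℕ) :
    #{σ : ∀ l, Fin (N l) → Bool | ∀ l, trueCount (σ l) = K l} =
      ∏ l, (N l).choose (K l) := by
  rw [← Fintype.card_subtype,
    Fintype.card_congr (Equiv.subtypePiEquivPi (p := fun l f => trueCount f = K l)),
    Fintype.card_pi]
  simp_rw [Fintype.card_subtype, card_trueCount_eq]

lemma sum_pi_comp_trueCount (N : ι → ℕ) (φ : (ι → ℕ) → ℝ) :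
    ∑ σ : ∀ l, Fin (N l) → Bool, φ (fun l => trueCount (σ l)) =
      ∑ K ∈ Fintype.piFinset (fun l => range (N l + 1)),
        (∏ l, (N l).choose (K l) : ℝ) * φ K := by
  rw [← sum_fiberwise_of_maps_to (g := fun σ l => trueCount (σ l))
    (t := Fintype.piFinset (fun l => range (N l + 1)))]
  · refine sum_congr rfl fun K _ => ?_
    rw [sum_congr rfl fun σ hσ => congrArg φ (mem_filter.1 hσ).2, sum_const, nsmul_eq_mul]
    norm_cast
    rw [← card_pi_trueCount_eq]
    simp only [funext_iff]
  · intro σ _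
    simpa [Nat.lt_succ_iff] using fun l => trueCount_le (σ l)

end Blocks

section MeanField

variable {ι : Type*} (N : ι → ℕ)

noncomputable def countMag (K : ι → ℕ) : ι → ℝ := fun l => (2 * K l - N l) / N l

noncomputable def blockMag (σ : ∀ l, Fin (N l) → Bool) : ι → ℝ :=
  fun l => (∑ i, spin14 (σ l i)) / N l

lemma blockMag_eq_countMag (σ : ∀ l, Fin (N l) → Bool) :
    blockMag N σ = countMag N (fun l => trueCount (σ l)) := by
  funext l
  rw [blockMag, countMag, sum_spin14_eq]

lemma countMag_mem_Icc {K : ι → ℕ} (hK : ∀ l, K l ≤ N l) :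
    countMag N K ∈ Set.Icc (fun _ => (-1 : ℝ)) (fun _ => 1) := by
  have habs : ∀ l, |countMag N K l| ≤ 1 := fun l => by
    rw [countMag, abs_div, Nat.abs_cast]
    refine div_le_one_of_le₀ (abs_le.2 ⟨?_, ?_⟩) (Nat.cast_nonneg _)
    · linarith [(Nat.cast_nonneg (K l) : (0 : ℝ) ≤ K l)]
    · linarith [(Nat.cast_le.2 (hK l) : (K l : ℝ) ≤ N l)]
  exact ⟨fun l => (abs_le.1 (habs l)).1, fun l => (abs_le.1 (habs l)).2⟩

variable [Fintype ι]

lemma prod_choose_div_two_pow_le {K : ι → ℕ} (hK : ∀ l, K l ≤ N l) :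
    ∏ l, ((N l).choose (K l) : ℝ) / 2 ^ N l ≤
      exp (-∑ l, N l * entI14 (countMag N K l)) := by
  rw [← sum_neg_distrib, exp_sum]
  exact prod_le_prod (fun _ _ => by positivity)
    fun l _ => Nat.choose_div_two_pow_le_exp_neg_mul_entI14 (hK l)

lemma exp_neg_le_prod_succ_mul_prod_choose_div_two_pow {K : ι → ℕ} (hK : ∀ l, K l ≤ N l) :
    exp (-∑ l, N l * entI14 (countMag N K l)) ≤
      (∏ l, ((N l : ℝ) + 1)) * ∏ l, ((N l).choose (K l) : ℝ) / 2 ^ N l := by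
  rw [← prod_mul_distrib, ← sum_neg_distrib, exp_sum]
  exact prod_le_prod (fun _ _ => by positivity)
    fun l _ => Nat.exp_neg_mul_entI14_le_succ_mul_choose_div_two_pow (hK l)

variable [DecidableEq ι]

noncomputable def pressure (Nt : ℕ) (g : (ι → ℝ) → ℝ) : ℝ :=
  1 / Nt * log (1 / 2 ^ Nt * ∑ σ : ∀ l, Fin (N l) → Bool, exp (Nt * g (blockMag N σ)))

lemma sum_blockMag_eq (φ : (ι → ℝ) → ℝ) :
    ∑ σ : ∀ l, Fin (N l) → Bool, φ (blockMag N σ) =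
      ∑ K ∈ Fintype.piFinset (fun l => range (N l + 1)),
        (∏ l, (N l).choose (K l) : ℝ) * φ (countMag N K) := by
  simp_rw [blockMag_eq_countMag]
  exact sum_pi_comp_trueCount N (fun K => φ (countMag N K))

lemma one_div_two_pow_mul_sum_exp_blockMag (G : (ι → ℝ) → ℝ) :
    1 / 2 ^ (∑ l, N l) * ∑ σ : ∀ l, Fin (N l) → Bool, exp (G (blockMag N σ)) =
      ∑ K ∈ Fintype.piFinset (fun l => range (N l + 1)),
        (∏ l, ((N l).choose (K l) : ℝ) / 2 ^ N l) * exp (G (countMag N K)) := by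
  rw [sum_blockMag_eq N (fun x => exp (G x)), mul_sum, ← prod_pow_eq_pow_sum]
  refine sum_congr rfl fun K _ => ?_
  rw [prod_div_distrib]
  ring

lemma partition_le (G : (ι → ℝ) → ℝ) (T : ℝ)
    (hT : ∀ K : ι → ℕ, (∀ l, K l ≤ N l) →
      G (countMag N K) - ∑ l, N l * entI14 (countMag N K l) ≤ T) :
    1 / 2 ^ (∑ l, N l) * ∑ σ : ∀ l, Fin (N l) → Bool, exp (G (blockMag N σ)) ≤
      (∏ l, ((N l : ℝ) + 1)) * exp T := by
  rw [one_div_two_pow_mul_sum_exp_blockMag]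
  calc _ ≤ ∑ _K ∈ Fintype.piFinset (fun l => range (N l + 1)), exp T := by
        refine sum_le_sum fun K hK => ?_
        have hK : ∀ l, K l ≤ N l := fun l => by
          simpa [Nat.lt_succ_iff] using Fintype.mem_piFinset.1 hK l
        calc _ ≤ exp (-∑ l, N l * entI14 (countMag N K l)) * exp (G (countMag N K)) := by
              gcongr
              exact prod_choose_div_two_pow_le N hK
          _ ≤ exp T := by
              rw [← exp_add, neg_add_eq_sub]
              exact exp_le_exp.2 (hT K hK)
    _ = (∏ l, ((N l : ℝ) + 1)) * exp T := by simp

lemma le_partition (G : (ι → ℝ) → ℝ) {K : ι → ℕ} (hK : ∀ l, K l ≤ N l) :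
    exp (G (countMag N K) - ∑ l, N l * entI14 (countMag N K l)) ≤
      (∏ l, ((N l : ℝ) + 1)) *
        (1 / 2 ^ (∑ l, N l) * ∑ σ : ∀ l, Fin (N l) → Bool, exp (G (blockMag N σ))) := by
  have hmem : K ∈ Fintype.piFinset (fun l => range (N l + 1)) :=
    Fintype.mem_piFinset.2 fun l => mem_range.2 (Nat.lt_succ_of_le (hK l))
  rw [one_div_two_pow_mul_sum_exp_blockMag]
  calc _ = exp (-∑ l, N l * entI14 (countMag N K l)) * exp (G (countMag N K)) := by
        rw [← exp_add, neg_add_eq_sub]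
    _ ≤ (∏ l, ((N l : ℝ) + 1)) *
          ((∏ l, ((N l).choose (K l) : ℝ) / 2 ^ N l) * exp (G (countMag N K))) := by
        rw [← mul_assoc]
        gcongr
        exact exp_neg_le_prod_succ_mul_prod_choose_div_two_pow N hK
    _ ≤ _ := by
        gcongr
        exact single_le_sum (f := fun K => (∏ l, ((N l).choose (K l) : ℝ) / 2 ^ N l) *
          exp (G (countMag N K))) (fun _ _ => by positivity) hmem

end MeanField

section Pressure

variable {ι : Type*} [Fintype ι] {N : ι → ℕ} {Nt : ℕ} {α : ι → ℝ}

lemma prod_succ_le_pow_card :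
    ∏ l, ((N l : ℝ) + 1) ≤ ((∑ l, N l : ℕ) + 1) ^ Fintype.card ι := by
  have h : ∏ l, (N l + 1) ≤ (∑ l, N l + 1) ^ Fintype.card ι :=
    prod_le_pow_card _ _ _ fun l _ => Nat.succ_le_succ (single_le_sum (by simp) (mem_univ l))
  exact_mod_cast h

lemma sum_natCast_mul_entI14 (hα : ∀ l, (N l : ℝ) = α l * Nt) (x : ι → ℝ) :
    ∑ l, (N l : ℝ) * entI14 (x l) = Nt * ∑ l, α l * entI14 (x l) := by
  rw [mul_sum]
  exact sum_congr rfl fun l _ => by rw [hα]; ring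

variable [DecidableEq ι] {g : (ι → ℝ) → ℝ}

lemma pressure_le (hNt : ∑ l, N l = Nt) (hpos : 0 < Nt) (hα : ∀ l, (N l : ℝ) = α l * Nt)
    {S : ℝ} (hS : ∀ x ∈ Set.Icc (fun _ => (-1 : ℝ)) (fun _ => 1),
      g x - ∑ l, α l * entI14 (x l) ≤ S) :
    pressure N Nt g ≤ S + Fintype.card ι * (log (Nt + 1) / Nt) := by
  have hNt₀ : (0 : ℝ) < Nt := by exact_mod_cast hpos
  have hZ := partition_le N (fun x => Nt * g x) (Nt * S) fun K hK => by
    rw [sum_natCast_mul_entI14 hα, ← mul_sub]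
    exact mul_le_mul_of_nonneg_left (hS _ (countMag_mem_Icc N hK)) hNt₀.le
  have hprod := prod_succ_le_pow_card (N := N)
  rw [hNt] at hZ hprod
  have hlog :
      log (1 / 2 ^ Nt * ∑ σ : ∀ l, Fin (N l) → Bool, exp (Nt * g (blockMag N σ))) ≤
        Nt * S + Fintype.card ι * log (Nt + 1) := by
    refine (log_le_log (by positivity)
      (hZ.trans (mul_le_mul_of_nonneg_right hprod (exp_pos _).le))).trans_eq ?_
    rw [log_mul (by positivity) (exp_pos _).ne', log_pow, log_exp]
    ring
  calc pressure N Nt g ≤ 1 / Nt * (Nt * S + Fintype.card ι * log (Nt + 1)) := by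
        rw [pressure]; gcongr
    _ = _ := by field_simp

lemma le_pressure (hNt : ∑ l, N l = Nt) (hpos : 0 < Nt) (hα : ∀ l, (N l : ℝ) = α l * Nt)
    {K : ι → ℕ} (hK : ∀ l, K l ≤ N l) :
    g (countMag N K) - ∑ l, α l * entI14 (countMag N K l) -
      Fintype.card ι * (log (Nt + 1) / Nt) ≤ pressure N Nt g := by
  have hNt₀ : (0 : ℝ) < Nt := by exact_mod_cast hpos
  set F := g (countMag N K) - ∑ l, α l * entI14 (countMag N K l)
  have hZ := le_partition N (fun x => Nt * g x) hK
  have hprod := prod_succ_le_pow_card (N := N)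
  rw [sum_natCast_mul_entI14 hα, ← mul_sub] at hZ
  rw [hNt] at hZ hprod
  have hlog : Nt * F ≤ Fintype.card ι * log (Nt + 1) +
      log (1 / 2 ^ Nt * ∑ σ : ∀ l, Fin (N l) → Bool, exp (Nt * g (blockMag N σ))) := by
    have h := log_le_log (exp_pos _)
      (hZ.trans (mul_le_mul_of_nonneg_right hprod (by positivity)))
    rwa [log_exp, log_mul (by positivity) (by positivity), log_pow] at h
  calc _ = 1 / (Nt : ℝ) * (Nt * F - Fintype.card ι * log (Nt + 1)) := by field_simp
    _ ≤ pressure N Nt g := by rw [pressure]; gcongr; linarith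

end Pressure

lemma tendsto_log_add_one_div_atTop : Tendsto (fun x : ℝ => log (x + 1) / x) atTop (nhds 0) := by
  simpa [Function.comp_def] using (tendsto_pow_log_div_mul_add_atTop 1 (-1) 1 one_ne_zero).comp
    (tendsto_atTop_add_const_right atTop 1 tendsto_id)

lemma tendsto_countMag_floor {ι : Type*} {N : ℕ → ι → ℕ}
    (hN : ∀ l, Tendsto (fun k => (N k l : ℝ)) atTop atTop) {x : ι → ℝ}
    (hx : x ∈ Set.Icc (fun _ => (-1 : ℝ)) (fun _ => 1)) :
    Tendsto (fun k => countMag (N k) fun l => ⌊(1 + x l) / 2 * N k l⌋₊) atTop (nhds x) := by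
  refine tendsto_pi_nhds.2 fun l => ?_
  have hq : 0 ≤ (1 + x l) / 2 := by linarith [hx.1 l]
  have h := ((tendsto_nat_floor_mul_div_atTop hq).comp (hN l)).const_mul 2 |>.sub_const 1
  convert h.congr' ?_ using 2
  · ring
  · filter_upwards [(hN l).eventually_gt_atTop 0] with k hk
    simp only [countMag, Function.comp]
    field_simp

theorem tendsto_pressure {ι : Type*} [Fintype ι] [DecidableEq ι] {N : ℕ → ι → ℕ}
    {Nt : ℕ → ℕ} {α : ι → ℝ} {g : (ι → ℝ) → ℝ} (hNt : ∀ k, ∑ l, N k l = Nt k)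
    (hNinf : Tendsto Nt atTop atTop) (hα₀ : ∀ l, 0 < α l)
    (hα : ∀ k l, (N k l : ℝ) = α l * Nt k) (hg : Continuous g) :
    Tendsto (fun k => pressure (N k) (Nt k) g) atTop
      (nhds (sSup ((fun x => g x - ∑ l, α l * entI14 (x l)) ''
        Set.Icc (fun _ => (-1 : ℝ)) (fun _ => 1)))) := by
  set F := fun x : ι → ℝ => g x - ∑ l, α l * entI14 (x l)
  have hF : Continuous F := by fun_prop
  set cube := Set.Icc (fun _ : ι => (-1 : ℝ)) (fun _ => 1)
  have hcompact : IsCompact (F '' cube) := isCompact_Icc.image hF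
  obtain ⟨x, hx, hxS⟩ :=
    hcompact.sSup_mem ((Set.nonempty_Icc.2 fun _ => by norm_num).image F)
  have hS : ∀ y ∈ cube, F y ≤ sSup (F '' cube) := fun y hy =>
    le_csSup hcompact.bddAbove (Set.mem_image_of_mem F hy)
  set ε := fun k => Fintype.card ι * (log (Nt k + 1) / Nt k)
  have hε : Tendsto ε atTop (nhds 0) := by
    simpa [ε, Function.comp_def] using (tendsto_log_add_one_div_atTop.comp
      (tendsto_natCast_atTop_atTop.comp hNinf)).const_mul (Fintype.card ι : ℝ)
  set K := fun k l => ⌊(1 + x l) / 2 * N k l⌋₊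
  have hK : ∀ k l, K k l ≤ N k l := fun k l =>
    Nat.floor_le_of_le (mul_le_of_le_one_left (Nat.cast_nonneg _) (by linarith [hx.2 l]))
  have hN : ∀ l, Tendsto (fun k => (N k l : ℝ)) atTop atTop := fun l => by
    simpa only [hα, Function.comp_def] using
      (tendsto_natCast_atTop_atTop.comp hNinf).const_mul_atTop (hα₀ l)
  refine tendsto_of_tendsto_of_tendsto_of_le_of_le'
    (g := fun k => F (countMag (N k) (K k)) - ε k) (h := fun k => sSup (F '' cube) + ε k)
    ?_ ?_ ?_ ?_
  · simpa [hxS] using ((hF.tendsto x).comp (tendsto_countMag_floor hN hx)).sub hε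
  · simpa using tendsto_const_nhds.add hε
  · filter_upwards [hNinf.eventually_gt_atTop 0] with k hk
    exact le_pressure (hNt k) hk (hα k) (hK k)
  · filter_upwards [hNinf.eventually_gt_atTop 0] with k hk
    exact pressure_le (hNt k) hk (hα k) hS

theorem stmt_14_general (n : ℕ) (J : Matrix (Fin n) (Fin n) ℝ)
    (h α : Fin n → ℝ) (hα : ∀ l, 0 < α l)
    -- sizes of the groups along the sequence of systems, with exact proportions α
    (Nl : ℕ → Fin n → ℕ) (Ntot : ℕ → ℕ)
    (hNtot : ∀ k, Ntot k = ∑ l, Nl k l)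
    (hprop : ∀ k l, (Nl k l : ℝ) = α l * Ntot k)
    (hNinf : Tendsto Ntot atTop atTop)
    -- magnetization of group `l` in configuration `σ`
    (m : ∀ k : ℕ, (∀ l : Fin n, Fin (Nl k l) → Bool) → Fin n → ℝ)
    (hm : ∀ k σ l, m k σ l = (∑ i, spin14 (σ l i)) / (Nl k l : ℝ))
    -- minus Hamiltonian divided by N, as a function of the magnetizations
    (g : (Fin n → ℝ) → ℝ)
    (hg : ∀ x, g x = (1 / 2) * ∑ l, ∑ s, α l * α s * J l s * x l * x s +
        ∑ l, α l * h l * x l)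
    (fbar : (Fin n → ℝ) → ℝ)
    (hfbar : ∀ x, fbar x = g x - ∑ l, α l * entI14 (x l))
    -- the finite-volume pressure
    (p : ℕ → ℝ)
    (hp : ∀ k, p k = (1 / (Ntot k : ℝ)) *
        Real.log ((1 / 2 ^ Ntot k) *
          ∑ σ : ∀ l : Fin n, Fin (Nl k l) → Bool, Real.exp ((Ntot k : ℝ) * g (m k σ)))) :
    Tendsto p atTop
      (nhds (sSup (fbar '' Set.Icc (fun _ => (-1 : ℝ)) (fun _ => 1)))) := by
  have hpressure : p = fun k => pressure (Nl k) (Ntot k) g := funext fun k => by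
    have hmag : ∀ σ, m k σ = blockMag (Nl k) σ := fun σ => funext (hm k σ)
    simp only [hp, pressure, hmag]
  have hg_cont : Continuous g := by
    simp only [funext hg]
    fun_prop
  rw [hpressure, funext hfbar]
  exact tendsto_pressure (fun k => (hNtot k).symm) hNinf hα hprop hg_cont

theorem stmt_14 (n : ℕ) (J : Matrix (Fin n) (Fin n) ℝ) (hJsymm : J.IsSymm)
    (h α : Fin n → ℝ) (hα : ∀ l, 0 < α l) (hαsum : ∑ l, α l = 1)
    -- sizes of the groups along the sequence of systems, with exact proportions α
    (Nl : ℕ → Fin n → ℕ) (Ntot : ℕ → ℕ)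
    (hNtot : ∀ k, Ntot k = ∑ l, Nl k l)
    (hprop : ∀ k l, (Nl k l : ℝ) = α l * Ntot k)
    (hNinf : Tendsto Ntot atTop atTop)
    -- magnetization of group `l` in configuration `σ`
    (m : ∀ k : ℕ, (∀ l : Fin n, Fin (Nl k l) → Bool) → Fin n → ℝ)
    (hm : ∀ k σ l, m k σ l = (∑ i, spin14 (σ l i)) / (Nl k l : ℝ))
    -- minus Hamiltonian divided by N, as a function of the magnetizations
    (g : (Fin n → ℝ) → ℝ)
    (hg : ∀ x, g x = (1 / 2) * ∑ l, ∑ s, α l * α s * J l s * x l * x s +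
        ∑ l, α l * h l * x l)
    (fbar : (Fin n → ℝ) → ℝ)
    (hfbar : ∀ x, fbar x = g x - ∑ l, α l * entI14 (x l))
    -- the finite-volume pressure
    (p : ℕ → ℝ)
    (hp : ∀ k, p k = (1 / (Ntot k : ℝ)) *
        Real.log ((1 / 2 ^ Ntot k) *
          ∑ σ : ∀ l : Fin n, Fin (Nl k l) → Bool, Real.exp ((Ntot k : ℝ) * g (m k σ)))) :
    Tendsto p atTop
      (nhds (sSup (fbar '' Set.Icc (fun _ => (-1 : ℝ)) (fun _ => 1)))) :=
  stmt_14_general n J h α hα Nl Ntot hNtot hprop hNinf m hm g hg fbar hfbar p hp
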